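/- arXiv:cs/0603110 — 2 statements merged into one kernel-verified Lean document; each statement's English description precedes it below -/
import Mathlib

section
/- If two probability measures μ and ν on the space of infinite sequences over a finite alphabet are mutually singular, then the likelihood ratio ν(x_{1:n})/μ(x_{1:n}) of the first n coordinates converges to 0 μ-almost surely as n → ∞. -/
open MeasureTheory Filter
open scoped ENNReal

/-- Cylinder set of sequences whose first `n` coordinates agree with `x`. -/
def cylinder {X : Type*} (x : ℕ → X) (n : ℕ) : Set (ℕ → X) := {ω | ∀ i < n, ω i = x i}

/-- Cylinder determined by a finite string. -/
def cylOf {X : Type*} (s : List X) : Set (ℕ → X) :=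
  {ω | ∀ i, (h : i < s.length) → ω i = s[i]}

lemma cylinder_eq_cylOf {X : Type*} (x : ℕ → X) (n : ℕ) :
    cylinder x n = cylOf (List.ofFn fun i : Fin n => x i) := by
  ext ω
  simp only [_root_.cylinder, cylOf, Set.mem_setOf_eq, List.length_ofFn, List.getElem_ofFn]

lemma measurableSet_cylOf {X : Type*} [MeasurableSpace X] [MeasurableSingletonClass X]
    (s : List X) : MeasurableSet (cylOf s) := by
  have : cylOf s = ⋂ i : Fin s.length, (fun ω : ℕ → X => ω i.1) ⁻¹' {s[i.1]} := by
    ext ω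
    simp only [cylOf, Set.mem_setOf_eq, Set.mem_iInter, Set.mem_preimage, Set.mem_singleton_iff]
    exact ⟨fun h i => h i.1 i.2, fun h i hi => h ⟨i, hi⟩⟩
  rw [this]
  exact MeasurableSet.iInter fun i =>
    (measurable_pi_apply i.1) (measurableSet_singleton _)

lemma measurableSet_cylinder {X : Type*} [MeasurableSpace X] [MeasurableSingletonClass X]
    (x : ℕ → X) (n : ℕ) : MeasurableSet (cylinder x n) := by
  rw [cylinder_eq_cylOf]; exact measurableSet_cylOf _

lemma cylOf_antitone {X : Type*} {s t : List X} (h : s <+: t) : cylOf t ⊆ cylOf s := by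
  intro ω hω i hi
  rw [h.getElem hi]
  exact hω i (lt_of_lt_of_le hi h.length_le)

lemma cylinder_antitone {X : Type*} (x : ℕ → X) {m n : ℕ} (h : m ≤ n) :
    cylinder x n ⊆ cylinder x m := fun ω hω i hi => hω i (lt_of_lt_of_le hi h)

lemma mem_cylinder_self {X : Type*} (x : ℕ → X) (n : ℕ) : x ∈ cylinder x n :=
  fun _ _ => rfl

lemma cylOf_prefix_or {X : Type*} {s t : List X} (h : (cylOf s ∩ cylOf t).Nonempty) :
    s <+: t ∨ t <+: s := by
  obtain ⟨ω, hs, ht⟩ := h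
  rcases le_total s.length t.length with hl | hl
  · left
    rw [List.prefix_iff_eq_take]
    refine List.ext_getElem (by simpa [min_eq_left hl]) fun i h1 h2 => ?_
    rw [List.getElem_take, ← hs i h1]
    exact ht i (lt_of_lt_of_le h1 hl)
  · right
    rw [List.prefix_iff_eq_take]
    refine List.ext_getElem (by simpa [min_eq_left hl]) fun i h1 h2 => ?_
    rw [List.getElem_take, ← ht i h1]
    exact hs i (lt_of_lt_of_le h1 hl)

/-- Vitali-type covering bound: the union of all cylinders contained in `U` on which
`ε·μ ≤ ν` has `μ`-measure at most `ν U / ε`. -/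
lemma cover_bound {X : Type*} [Countable X] [MeasurableSpace X] [MeasurableSingletonClass X]
    (μ ν : Measure (ℕ → X)) (U : Set (ℕ → X)) (ε : ℝ≥0∞) :
    ε * μ (⋃ s ∈ {s : List X | cylOf s ⊆ U ∧ ε * μ (cylOf s) ≤ ν (cylOf s)}, cylOf s) ≤ ν U := by
  set C : Set (List X) := {s : List X | cylOf s ⊆ U ∧ ε * μ (cylOf s) ≤ ν (cylOf s)} with hC
  set D : Set (List X) := {s ∈ C | ∀ t ∈ C, t <+: s → t = s} with hD
  -- every element of C has a prefix in D
  have key : ∀ n (s : List X), s ∈ C → s.length = n → ∃ t ∈ D, t <+: s := by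
    intro n
    induction n using Nat.strong_induction_on with
    | _ n ih =>
      intro s hs hlen
      by_cases hsD : s ∈ D
      · exact ⟨s, hsD, List.prefix_refl s⟩
      · have : ∃ t ∈ C, t <+: s ∧ t ≠ s := by
          by_contra hcon
          push_neg at hcon
          exact hsD ⟨hs, fun t ht hts => hcon t ht hts⟩
        obtain ⟨t, htC, hts, htne⟩ := this
        have hlt : t.length < n := by
          rw [← hlen]
          exact lt_of_le_of_ne hts.length_le (fun he => htne (hts.eq_of_length he))
        obtain ⟨u, huD, hut⟩ := ih t.length hlt t htC rfl
        exact ⟨u, huD, hut.trans hts⟩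
  have hUnion : (⋃ s ∈ C, cylOf s) = ⋃ s ∈ D, cylOf s := by
    apply Set.Subset.antisymm
    · refine Set.iUnion₂_subset fun s hs => ?_
      obtain ⟨t, htD, hts⟩ := key s.length s hs rfl
      exact (cylOf_antitone hts).trans (Set.subset_biUnion_of_mem htD)
    · exact Set.iUnion₂_subset fun s hs => Set.subset_biUnion_of_mem hs.1
  have hdisj : D.PairwiseDisjoint cylOf := by
    intro s hs t ht hne
    rw [Function.onFun, Set.disjoint_iff_inter_eq_empty]
    by_contra hcon
    rcases cylOf_prefix_or (Set.nonempty_iff_ne_empty.2 hcon) with hp | hp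
    · exact hne (ht.2 s hs.1 hp)
    · exact hne ((hs.2 t ht.1 hp).symm)
  have hμ : μ (⋃ s ∈ D, cylOf s) = ∑' s : D, μ (cylOf s) :=
    measure_biUnion D.to_countable hdisj fun s _ => measurableSet_cylOf s
  have hν : ν (⋃ s ∈ D, cylOf s) = ∑' s : D, ν (cylOf s) :=
    measure_biUnion D.to_countable hdisj fun s _ => measurableSet_cylOf s
  calc ε * μ (⋃ s ∈ C, cylOf s) = ∑' s : D, ε * μ (cylOf s) := by
        rw [hUnion, hμ, ENNReal.tsum_mul_left]
    _ ≤ ∑' s : D, ν (cylOf s) := ENNReal.tsum_le_tsum fun s => s.2.1.2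
    _ = ν (⋃ s ∈ D, cylOf s) := hν.symm
    _ ≤ ν U := measure_mono (Set.iUnion₂_subset fun s hs => hs.1.1)

lemma exists_cylinder_subset {X : Type*} [TopologicalSpace X] [DiscreteTopology X]
    {U : Set (ℕ → X)} (hU : IsOpen U) {x : ℕ → X} (hx : x ∈ U) :
    ∃ n, _root_.cylinder x n ⊆ U := by
  obtain ⟨I, u, hu, hsub⟩ := isOpen_pi_iff.1 hU x hx
  refine ⟨(I.sup id) + 1, fun ω hω => hsub fun a ha => ?_⟩
  have : ω a = x a := hω a (Nat.lt_succ_of_le (Finset.le_sup (f := id) ha))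
  rw [this]
  exact (hu a ha).2

/-- If two probability measures μ and ν on the space of infinite sequences over a finite
alphabet are mutually singular, then the likelihood ratio ν(x_{1:n})/μ(x_{1:n}) of the first
n coordinates converges to 0 μ-almost surely. -/
theorem singular_likelihood_ratio_tendsto_zero
    {X : Type*} [Fintype X] [MeasurableSpace X] [MeasurableSingletonClass X]
    (μ ν : Measure (ℕ → X)) [IsProbabilityMeasure μ] [IsProbabilityMeasure ν]
    (h : μ.MutuallySingular ν) :
    ∀ᵐ ω ∂μ, Tendsto (fun n : ℕ =>
      (ν (cylinder ω n)).toReal / (μ (cylinder ω n)).toReal) atTop (nhds 0) := by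
  letI : TopologicalSpace X := ⊥
  haveI : DiscreteTopology X := ⟨rfl⟩
  obtain ⟨S, hSm, hS, hSc⟩ := h
  set Bad : ℕ → Set (ℕ → X) := fun k =>
    {ω | ∀ m, ∃ n, m ≤ n ∧
      ((k : ℝ≥0∞) + 1)⁻¹ * μ (_root_.cylinder ω n) ≤ ν (_root_.cylinder ω n)} with hBadDef
  have hBad : ∀ k, μ (Sᶜ ∩ Bad k) = 0 := by
    intro k
    set ε : ℝ≥0∞ := ((k : ℝ≥0∞) + 1)⁻¹ with hεdef
    have hε0 : ε ≠ 0 := by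
      simp [hεdef, ENNReal.inv_ne_zero]
    have hmain : ∀ δ : ℝ≥0∞, 0 < δ → ε * μ (Sᶜ ∩ Bad k) ≤ δ := by
      intro δ hδ
      obtain ⟨U, hUsub, hUopen, hUν⟩ :=
        Set.exists_isOpen_lt_of_lt (μ := ν) Sᶜ δ (by simpa [hSc] using hδ)
      have hsub : Sᶜ ∩ Bad k ⊆
          ⋃ s ∈ {s : List X | cylOf s ⊆ U ∧ ε * μ (cylOf s) ≤ ν (cylOf s)}, cylOf s := by
        rintro ω ⟨hω1, hω2⟩
        obtain ⟨m, hm⟩ := exists_cylinder_subset hUopen (hUsub hω1)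
        obtain ⟨n, hmn, hle⟩ := hω2 m
        have hcylsub : _root_.cylinder ω n ⊆ U := (cylinder_antitone ω hmn).trans hm
        have hCmem : (List.ofFn fun i : Fin n => ω i) ∈
            {s : List X | cylOf s ⊆ U ∧ ε * μ (cylOf s) ≤ ν (cylOf s)} := by
          constructor
          · rw [← cylinder_eq_cylOf]; exact hcylsub
          · rw [← cylinder_eq_cylOf]; exact hle
        have hωmem : ω ∈ cylOf (List.ofFn fun i : Fin n => ω i) := by
          rw [← cylinder_eq_cylOf]; exact mem_cylinder_self ω n
        exact Set.mem_biUnion hCmem hωmem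
      calc ε * μ (Sᶜ ∩ Bad k)
          ≤ ε * μ (⋃ s ∈ {s : List X | cylOf s ⊆ U ∧ ε * μ (cylOf s) ≤ ν (cylOf s)}, cylOf s) :=
            mul_le_mul_right (measure_mono hsub) ε
        _ ≤ ν U := cover_bound μ ν U ε
        _ ≤ δ := hUν.le
    have hz : ε * μ (Sᶜ ∩ Bad k) = 0 := by
      refine le_antisymm ?_ zero_le
      refine ENNReal.le_of_forall_pos_le_add fun δ hδ _ => ?_
      simpa using hmain δ (by exact_mod_cast hδ)
    rcases mul_eq_zero.1 hz with h0 | h0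
    · exact absurd h0 hε0
    · exact h0
  have h1 : ∀ᵐ ω ∂μ, ω ∉ S := by
    rw [ae_iff]
    simpa [not_not] using hS
  have h2 : ∀ᵐ ω ∂μ, ∀ k : ℕ, ¬ (ω ∈ Sᶜ ∩ Bad k) := by
    rw [ae_all_iff]
    intro k
    rw [ae_iff]
    simp only [not_not]
    exact hBad k
  filter_upwards [h1, h2] with ω hω1 hω2
  have hgood : ∀ k : ℕ, ∃ m, ∀ n, m ≤ n →
      ν (_root_.cylinder ω n) < ((k : ℝ≥0∞) + 1)⁻¹ * μ (_root_.cylinder ω n) := by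
    intro k
    have hnb : ω ∉ Bad k := fun hb => hω2 k ⟨hω1, hb⟩
    rw [hBadDef] at hnb
    simp only [Set.mem_setOf_eq, not_forall, not_exists, not_and, not_le] at hnb
    obtain ⟨m, hm⟩ := hnb
    exact ⟨m, hm⟩
  rw [Metric.tendsto_atTop]
  intro e he
  obtain ⟨k, hk⟩ := exists_nat_one_div_lt he
  obtain ⟨m, hm⟩ := hgood k
  refine ⟨m, fun n hn => ?_⟩
  have hlt := hm n hn
  have hμfin : μ (_root_.cylinder ω n) ≠ ∞ := measure_ne_top μ _
  have hνfin : ν (_root_.cylinder ω n) ≠ ∞ := measure_ne_top ν _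
  have hrfin : ((k : ℝ≥0∞) + 1)⁻¹ * μ (_root_.cylinder ω n) ≠ ∞ :=
    ENNReal.mul_ne_top (by simp) hμfin
  have hreal : (ν (_root_.cylinder ω n)).toReal
      < ((k : ℝ) + 1)⁻¹ * (μ (_root_.cylinder ω n)).toReal := by
    have := (ENNReal.toReal_lt_toReal hνfin hrfin).2 hlt
    rw [ENNReal.toReal_mul, ENNReal.toReal_inv,
      ENNReal.toReal_add (ENNReal.natCast_ne_top k) ENNReal.one_ne_top] at this
    simpa using this
  have hμpos : 0 < (μ (_root_.cylinder ω n)).toReal := by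
    rcases lt_or_ge 0 (μ (_root_.cylinder ω n)).toReal with hp | hp
    · exact hp
    · have h0 : (μ (_root_.cylinder ω n)).toReal = 0 :=
        le_antisymm hp ENNReal.toReal_nonneg
      rw [h0, mul_zero] at hreal
      exact absurd hreal (not_lt.2 ENNReal.toReal_nonneg)
  rw [Real.dist_eq, sub_zero,
    abs_of_nonneg (div_nonneg ENNReal.toReal_nonneg ENNReal.toReal_nonneg)]
  calc (ν (_root_.cylinder ω n)).toReal / (μ (_root_.cylinder ω n)).toReal
      < ((k : ℝ) + 1)⁻¹ * (μ (_root_.cylinder ω n)).toReal / (μ (_root_.cylinder ω n)).toReal :=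
        (div_lt_div_iff_of_pos_right hμpos).2 hreal
    _ = ((k : ℝ) + 1)⁻¹ := mul_div_cancel_right₀ _ (ne_of_gt hμpos)
    _ < e := by rwa [one_div] at hk
end

section
/- Consider environments with two actions {a, b}, rewards in {0,1,2}, and no observations. Let ν_0 give reward 1 for action a and reward 0 for action b at every step. For each s > 0 let ν_s give reward 1 for action a always, and reward 2 for action b at step i if the longest consecutive run of action b so far exceeds n_i and n_i ≥ s, where n_i is the number of a-actions taken up to step i, and reward 0 for b otherwise. Then no single deterministic policy p satisfies liminf_n (1/n)Σ_{i=1}^n r_i^{p,ν} = V*_ν for all ν in {ν_0, ν_1, ν_2, ...}: if p achieves the optimal average value 2 in every ν_s with s ≥ 1, then in ν_0 its lower average value is at most 1/2 < 1 = V*_{ν_0}. -/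
open Filter Finset

open Classical in
/-- Length of the longest consecutive run of action `b` (= `false`) in the action history. -/
noncomputable def maxRunB (ys : List Bool) : ℕ :=
  Finset.sup (Finset.range (ys.length + 1)) (fun L =>
    if ∃ j ∈ Finset.range (ys.length + 1), (ys.drop j).take L = List.replicate L false
    then L else 0)

/-- Environment ν₀: reward 1 for action a (= `true`), reward 0 for action b (= `false`). -/
def nuZero : List Bool → ℝ := fun ys => if ys.getLast? = some true then 1 else 0

/-- Environment ν_s: reward 1 for action a; reward 2 for action b at step i if the longest
consecutive run of b's exceeds the number n_i of a-actions taken so far and n_i ≥ s,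
otherwise reward 0 for b. -/
noncomputable def nuS (s : ℕ) : List Bool → ℝ := fun ys =>
  if ys.getLast? = some true then 1
  else if s ≤ ys.count true ∧ ys.count true < maxRunB ys then 2 else 0

/-- The action-reward history pairs determined by an action prefix in environment `R`. -/
def histPairs (R : List Bool → ℝ) (ys : List Bool) : List (Bool × ℝ) :=
  List.ofFn (fun j : Fin ys.length => (ys.get j, R (ys.take (j + 1))))

/-- Action prefix of length `n` generated by policy `p` in deterministic environment `R`. -/
def acts (p : List (Bool × ℝ) → Bool) (R : List Bool → ℝ) : ℕ → List Bool
  | 0 => []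
  | n + 1 => acts p R n ++ [p (histPairs R (acts p R n))]

/-- Reward received at step `i` by policy `p` in deterministic environment `R`. -/
def rew (p : List (Bool × ℝ) → Bool) (R : List Bool → ℝ) (i : ℕ) : ℝ := R (acts p R (i + 1))

/- ---------------- auxiliary lemmas ---------------- -/

lemma maxRunB_le_count_false (ys : List Bool) : maxRunB ys ≤ ys.count false := by
  classical
  unfold maxRunB
  apply Finset.sup_le
  intro L _
  split_ifs with h
  · obtain ⟨j, _, hrep⟩ := h
    calc L = ((ys.drop j).take L).count false := by rw [hrep]; simp
    _ ≤ ys.count false :=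
        (((List.take_sublist _ _).trans (List.drop_sublist _ _)).count_le false)
  · exact Nat.zero_le _

lemma count_true_add_count_false (l : List Bool) : l.count true + l.count false = l.length := by
  induction l with
  | nil => simp
  | cons x t ih => cases x <;> simp [List.count_cons] <;> omega

lemma acts_length (p : List (Bool × ℝ) → Bool) (R : List Bool → ℝ) (n : ℕ) :
    (acts p R n).length = n := by
  induction n with
  | zero => rfl
  | succ n ih => simp [acts, ih]

lemma acts_take (p : List (Bool × ℝ) → Bool) (R : List Bool → ℝ) {m n : ℕ} (h : m ≤ n) :
    (acts p R n).take m = acts p R m := by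
  induction n with
  | zero => interval_cases m; rfl
  | succ n ih =>
    rcases Nat.lt_or_ge m (n + 1) with hm | hm
    · have hm' : m ≤ n := Nat.lt_succ_iff.mp hm
      rw [acts, List.take_append_of_le_length (by rw [acts_length]; exact hm'), ih hm']
    · have hmn : m = n + 1 := le_antisymm h hm
      subst hmn
      exact List.take_of_length_le (le_of_eq (acts_length p R (n + 1)))

lemma nuS_ne_two_eq_nuZero {s : ℕ} {ys : List Bool} (h : nuS s ys ≠ 2) :
    nuS s ys = nuZero ys := by
  unfold nuS nuZero at *
  by_cases h1 : ys.getLast? = some true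
  · simp [h1]
  · rw [if_neg h1] at h ⊢
    by_cases h2 : s ≤ ys.count true ∧ ys.count true < maxRunB ys
    · exact absurd (if_pos h2) h
    · rw [if_neg h2, if_neg h1]

lemma nuS_nonneg (s : ℕ) (ys : List Bool) : 0 ≤ nuS s ys := by
  unfold nuS; split_ifs <;> norm_num

lemma nuS_le_one_of_ne_two {s : ℕ} {ys : List Bool} (h : nuS s ys ≠ 2) : nuS s ys ≤ 1 := by
  unfold nuS at *; split_ifs at * <;> first | exact absurd rfl h | norm_num

lemma nuZero_nonneg (ys : List Bool) : 0 ≤ nuZero ys := by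
  unfold nuZero; split_ifs <;> norm_num

/-- as long as no reward 2 has been produced, the trajectories in ν₀ and ν_s agree -/
lemma acts_eq_of_no_two (p : List (Bool × ℝ) → Bool) (s T : ℕ)
    (hT : ∀ j < T, rew p (nuS s) j ≠ 2) :
    ∀ k ≤ T + 1, acts p nuZero k = acts p (nuS s) k := by
  intro k hk
  induction k with
  | zero => rfl
  | succ k ih =>
    have hk' : k ≤ T + 1 := Nat.le_of_succ_le hk
    have ihk := ih hk'
    have hkT : k ≤ T := Nat.lt_succ_iff.mp hk
    have key : ∀ m : ℕ, m < k →
        nuZero ((acts p nuZero k).take (m + 1)) = nuS s ((acts p nuZero k).take (m + 1)) := by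
      intro m hm
      have h1 : (acts p nuZero k).take (m + 1) = acts p nuZero (m + 1) := acts_take p _ hm
      have h3 : (acts p (nuS s) k).take (m + 1) = acts p (nuS s) (m + 1) := acts_take p _ hm
      have h2 : acts p nuZero (m + 1) = acts p (nuS s) (m + 1) := by
        rw [← h1, ← h3, ihk]
      have hne : nuS s (acts p (nuS s) (m + 1)) ≠ 2 := hT m (lt_of_lt_of_le hm hkT)
      rw [h1, h2]
      exact (nuS_ne_two_eq_nuZero hne).symm
    have hhist : histPairs nuZero (acts p nuZero k) = histPairs (nuS s) (acts p (nuS s) k) := by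
      rw [← ihk]
      unfold histPairs
      rw [List.ofFn_inj]
      funext j
      have hj' : (j : ℕ) < k := by simpa [acts_length] using j.isLt
      rw [key j hj']
    rw [acts, acts, hhist, ihk]

lemma sum_rew_nuZero (p : List (Bool × ℝ) → Bool) (n : ℕ) :
    ∑ i ∈ Finset.range n, rew p nuZero i = ((acts p nuZero n).count true : ℝ) := by
  induction n with
  | zero => simp [acts]
  | succ n ih =>
    rw [Finset.sum_range_succ, ih]
    show _ + nuZero (acts p nuZero (n + 1)) = _
    rw [acts]
    set x := p (histPairs nuZero (acts p nuZero n)) with hx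
    have : nuZero (acts p nuZero n ++ [x]) = if x = true then 1 else 0 := by
      unfold nuZero; simp
    rw [this, List.count_append]
    cases x <;> simp

/-- No single deterministic policy is self-optimizing for the class {ν₀, ν₁, ν₂, ...}:
if a policy achieves the optimal lower average value 2 in every ν_s with s ≥ 1, then in ν₀
its lower average value is at most 1/2 < 1 = V*_{ν₀}. -/
theorem no_policy_optimal_for_trap_class (p : List (Bool × ℝ) → Bool)
    (hopt : ∀ s : ℕ, 1 ≤ s →
      liminf (fun n : ℕ => (∑ i ∈ Finset.range n, rew p (nuS s) i) / n) atTop = 2) :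
    liminf (fun n : ℕ => (∑ i ∈ Finset.range n, rew p nuZero i) / n) atTop ≤ 1 / 2 := by
  classical
  -- boundedness below of the ν₀ averages
  have hbdd : IsBoundedUnder (· ≥ ·) atTop
      (fun n : ℕ => (∑ i ∈ Finset.range n, rew p nuZero i) / n) := by
    refine Filter.isBoundedUnder_of ⟨0, fun n => ?_⟩
    have hs : (0:ℝ) ≤ ∑ i ∈ Finset.range n, rew p nuZero i :=
      Finset.sum_nonneg fun i _ => nuZero_nonneg _
    positivity
  refine Filter.liminf_le_of_frequently_le ?_ hbdd
  rw [Filter.frequently_atTop]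
  intro N
  set s := N + 1 with hs
  have hs1 : 1 ≤ s := Nat.le_add_left 1 N
  -- there must be a step with reward 2 in ν_s
  have hex : ∃ n, rew p (nuS s) n = 2 := by
    by_contra hno
    push_neg at hno
    have hle : ∀ n : ℕ, (∑ i ∈ Finset.range n, rew p (nuS s) i) / n ≤ 1 := by
      intro n
      rcases Nat.eq_zero_or_pos n with rfl | hn
      · simp
      · rw [div_le_one (by exact_mod_cast hn)]
        calc ∑ i ∈ Finset.range n, rew p (nuS s) i ≤ ∑ i ∈ Finset.range n, 1 :=
              Finset.sum_le_sum fun i _ => nuS_le_one_of_ne_two (hno i)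
        _ = n := by simp
    have hb : IsBoundedUnder (· ≥ ·) atTop
        (fun n : ℕ => (∑ i ∈ Finset.range n, rew p (nuS s) i) / n) := by
      refine Filter.isBoundedUnder_of ⟨0, fun n => ?_⟩
      have : (0:ℝ) ≤ ∑ i ∈ Finset.range n, rew p (nuS s) i :=
        Finset.sum_nonneg fun i _ => nuS_nonneg _ _
      positivity
    have h1 : liminf (fun n : ℕ => (∑ i ∈ Finset.range n, rew p (nuS s) i) / n) atTop ≤ 1 :=
      Filter.liminf_le_of_frequently_le
        ((Filter.Eventually.of_forall hle).frequently) hb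
    rw [hopt s hs1] at h1
    norm_num at h1
  -- first time reward 2 appears
  set T := Nat.find hex with hT
  have hT2 : rew p (nuS s) T = 2 := Nat.find_spec hex
  have hTmin : ∀ j < T, rew p (nuS s) j ≠ 2 := fun j hj => Nat.find_min hex hj
  have hacts : acts p nuZero (T + 1) = acts p (nuS s) (T + 1) :=
    acts_eq_of_no_two p s T hTmin (T + 1) le_rfl
  set ys := acts p (nuS s) (T + 1) with hys
  have hlen : ys.length = T + 1 := acts_length p _ _
  -- unpack the reward-2 condition
  have hcond : s ≤ ys.count true ∧ ys.count true < maxRunB ys := by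
    have h2 : nuS s ys = 2 := hT2
    unfold nuS at h2
    split_ifs at h2 with h1 hcnd
    · norm_num at h2
    · exact hcnd
    · norm_num at h2
  set t := ys.count true with htdef
  have hfalse : t + 1 ≤ ys.count false :=
    le_trans hcond.2 (maxRunB_le_count_false ys)
  have hlen2 : 2 * t + 1 ≤ T + 1 := by
    have := count_true_add_count_false ys
    omega
  refine ⟨T + 1, ?_, ?_⟩
  · omega
  · rw [sum_rew_nuZero p (T + 1), hacts, ← htdef]
    rw [div_le_div_iff₀ (by exact_mod_cast Nat.succ_pos T) (by norm_num : (0:ℝ) < 2)]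
    have h2t : ((2 * t + 1 : ℕ) : ℝ) ≤ ((T + 1 : ℕ) : ℝ) := by exact_mod_cast hlen2
    push_cast at h2t ⊢
    linarith
end
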